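/- arXiv:1510.00510 — 7 statements merged into one kernel-verified Lean document; each statement's English description precedes it below -/
import Mathlib

section
/- For any finite set A ⊆ ℕⁿ there exists γ ∈ (ℕ₊)ⁿ (all coordinates strictly positive natural numbers) such that for every α ∈ A and every β ∈ ℕⁿ with α <lex β one has α·γ < β·γ, where · denotes the standard dot product ∑ᵢ αᵢγᵢ. -/
/-!
Take `B` bounding every coordinate of every `α ∈ A` and the weights `γ i = (B + 1) ^ (n - 1 - i)`,
so that `α · γ` reads `α` as a number written in base `B + 1`. Each weight then exceeds `B` times
the sum of all later weights, so raising the first differing coordinate outweighs whatever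
happens at the later ones.
-/

/-- `α <lex β`: at the smallest index `i` with `α i ≠ β i` one has `α i < β i`. -/
def LexLt {n : ℕ} (α β : Fin n → ℕ) : Prop :=
  ∃ i : Fin n, (∀ j : Fin n, j < i → α j = β j) ∧ α i < β i

open Finset

section
variable {ι : Type*} [Fintype ι] [LinearOrder ι] [LocallyFiniteOrderBot ι] [LocallyFiniteOrderTop ι]

theorem Finset.sum_eq_sum_Iio_add_add_sum_Ioi {M : Type*} [AddCommMonoid M] (f : ι → M) (i : ι) :
    ∑ j, f j = ∑ j ∈ Iio i, f j + (f i + ∑ j ∈ Ioi i, f j) := by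
  rw [add_sum_Ioi_eq_sum_Ici, ← sum_filter_add_sum_filter_not univ (· < i)]
  congr 2 <;> ext j <;> simp

theorem sum_mul_lt_sum_mul_of_dominant {α β γ : ι → ℕ} {B : ℕ} {i : ι}
    (hdom : ∑ j ∈ Ioi i, B * γ j < γ i) (hB : ∀ j > i, α j ≤ B)
    (heq : ∀ j < i, α j = β j) (hlt : α i < β i) :
    ∑ j, α j * γ j < ∑ j, β j * γ j := by
  rw [sum_eq_sum_Iio_add_add_sum_Ioi _ i, sum_eq_sum_Iio_add_add_sum_Ioi _ i,
    sum_congr rfl fun j hj => by rw [heq j (mem_Iio.mp hj)]]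
  gcongr ?_ + ?_
  calc α i * γ i + ∑ j ∈ Ioi i, α j * γ j
      ≤ α i * γ i + ∑ j ∈ Ioi i, B * γ j := by gcongr with j hj; exact hB j (mem_Ioi.mp hj)
    _ < (α i + 1) * γ i := by rw [add_one_mul]; gcongr
    _ ≤ β i * γ i := by gcongr; exact hlt
    _ ≤ β i * γ i + ∑ j ∈ Ioi i, β j * γ j := Nat.le_add_right _ _

end

theorem Fin.sum_Ioi_mul_pow_rev_lt {n : ℕ} (B : ℕ) (i : Fin n) :
    ∑ j ∈ Ioi i, B * (B + 1) ^ (j.rev : ℕ) < (B + 1) ^ (i.rev : ℕ) := by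
  have hrev := sum_map (Ioi i) revPerm.toEmbedding fun k => B * (B + 1) ^ (k : ℕ)
  have hval := sum_map (Iio i.rev) valEmbedding fun t => B * (B + 1) ^ t
  rw [map_revPerm_Ioi] at hrev
  rw [map_valEmbedding_Iio, Nat.Iio_eq_range] at hval
  simp only [Equiv.coe_toEmbedding, revPerm_apply, valEmbedding_apply] at hrev hval
  rw [← hrev, ← hval, ← mul_sum, ← geom_sum_mul_add B, mul_comm]
  exact Nat.lt_succ_self _

theorem stmt0 (n : ℕ) (A : Finset (Fin n → ℕ)) :
    ∃ γ : Fin n → ℕ, (∀ i, 0 < γ i) ∧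
      ∀ α ∈ A, ∀ β : Fin n → ℕ, LexLt α β →
        ∑ i, α i * γ i < ∑ i, β i * γ i := by
  obtain ⟨B, hB⟩ : ∃ B, ∀ α ∈ A, ∀ j, α j ≤ B :=
    ⟨univ.sup (A.sup id), fun α hα j => (le_sup (f := id) hα j).trans (le_sup (mem_univ j))⟩
  refine ⟨fun i => (B + 1) ^ (i.rev : ℕ), fun i => by positivity, ?_⟩
  rintro α hα β ⟨i, heq, hlt⟩
  exact sum_mul_lt_sum_mul_of_dominant (Fin.sum_Ioi_mul_pow_rev_lt B i) (fun j _ => hB α hα j)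
    heq hlt
end

section
/- Let Γ be an additive subsemigroup of ℕⁿ × ℕ, for k ≥ 1 set Γ_k := { α ∈ ℕⁿ : (α,k) ∈ Γ } and Δ_k := (1/k)·Conv(Γ_k), and let Δ be the closed convex hull in ℝⁿ of ⋃_{k≥1} Δ_k. If K is a compact subset of the interior of Δ, then there exists an integer k₀ ≥ 1 such that K ⊆ Δ_k for every positive integer multiple k of k₀. -/
/-!
Since `Γ` is a semigroup, `Conv(Γ_l) + Conv(Γ_m) ⊆ Conv(Γ_{l+m})`, so `Δ_l ⊆ Δ_{ml}` for
every `m ≥ 1`. In finite dimension a convex set has the same interior as its closure, so `K`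
lies in the interior of `Conv(⋃ Δ_k)`. Around each point of `K` sits a small simplex inside
`Conv(⋃ Δ_k)`; by compactness finitely many simplices cover `K`, and their vertices lie in the
convex hull of finitely many points of `⋃ Δ_k`, each in some `Δ_κ`. Every multiple of the
product `k₀` of these `κ` works.
-/

open Set Pointwise

theorem Set.Finite.exists_finite_subset_convexHull {R E : Type*} [Field R] [LinearOrder R]
    [IsStrictOrderedRing R] [AddCommGroup E] [Module R E] {t S : Set E} (ht : t.Finite)
    (htS : t ⊆ convexHull R S) : ∃ G ⊆ S, G.Finite ∧ t ⊆ convexHull R G := by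
  have hfin : ∀ p ∈ t, ∃ F : Finset E, ↑F ⊆ S ∧ p ∈ convexHull R (F : Set E) := by
    intro p hp
    have hpS := htS hp
    rw [convexHull_eq_union_convexHull_finite_subsets] at hpS
    simpa using hpS
  choose! F hFS hpF using hfin
  exact ⟨⋃ p ∈ t, F p, iUnion₂_subset hFS, ht.biUnion fun p _ => (F p).finite_toSet,
    fun p hp => convexHull_mono (subset_biUnion_of_mem hp) (hpF p hp)⟩

section FiniteDimensional

variable {E : Type*} [NormedAddCommGroup E] [NormedSpace ℝ E] [FiniteDimensional ℝ E]

theorem Convex.interior_closure_eq_interior {s : Set E} (hs : Convex ℝ s) :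
    interior (closure s) = interior s := by
  rcases (interior s).eq_empty_or_nonempty with h | h
  · rw [h]
    refine eq_empty_of_forall_notMem fun x hx => ?_
    have hspan : affineSpan ℝ (closure s) = ⊤ :=
      hs.closure.interior_nonempty_iff_affineSpan_eq_top.1 ⟨x, hx⟩
    have hle : affineSpan ℝ (closure s) ≤ affineSpan ℝ s := affineSpan_le.2 <|
      closure_minimal (subset_affineSpan ℝ s) (affineSpan ℝ s).closed_of_finiteDimensional
    rw [hspan, top_le_iff, ← hs.interior_nonempty_iff_affineSpan_eq_top, h] at hle
    exact not_nonempty_empty hle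
  · exact hs.interior_closure_eq_interior_of_nonempty_interior h

theorem IsCompact.exists_finite_subset_convexHull {K S : Set E} (hK : IsCompact K)
    (hKS : K ⊆ interior (convexHull ℝ S)) : ∃ G ⊆ S, G.Finite ∧ K ⊆ convexHull ℝ G := by
  have hsimplex : ∀ x ∈ K, ∃ P : Set E,
      P.Finite ∧ P ⊆ convexHull ℝ S ∧ x ∈ interior (convexHull ℝ P) := by
    intro x hx
    obtain ⟨b, hxb, hbS⟩ :=
      exists_mem_interior_convexHull_affineBasis (isOpen_interior.mem_nhds (hKS hx))
    exact ⟨range b, finite_range b,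
      (subset_convexHull ℝ _).trans (hbS.trans interior_subset), hxb⟩
  choose! P hPfin hPS hxP using hsimplex
  obtain ⟨t, htK, htfin, hKt⟩ := hK.elim_finite_subcover_image (fun x _ => isOpen_interior)
    fun x hx => mem_biUnion hx (hxP x hx)
  obtain ⟨G, hGS, hGfin, hPG⟩ :=
    (htfin.biUnion fun x hx => hPfin x (htK hx)).exists_finite_subset_convexHull
      (iUnion₂_subset fun x hx => hPS x (htK hx))
  refine ⟨G, hGS, hGfin, hKt.trans (iUnion₂_subset fun x hx => ?_)⟩
  calc interior (convexHull ℝ (P x)) ⊆ convexHull ℝ (P x) := interior_subset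
    _ ⊆ convexHull ℝ G :=
      convexHull_min ((subset_biUnion_of_mem hx).trans hPG) (convex_convexHull ℝ G)

end FiniteDimensional

section GradedFamily

variable {E : Type*} [AddCommGroup E] [Module ℝ E] {A : ℕ → Set E}

theorem natCast_succ_smul_mem_convexHull (hA : ∀ a b, A a + A b ⊆ A (a + b)) {l : ℕ} {x : E}
    (hx : x ∈ convexHull ℝ (A l)) (m : ℕ) :
    ((m + 1 : ℕ) : ℝ) • x ∈ convexHull ℝ (A ((m + 1) * l)) := by
  induction m with
  | zero => simpa using hx
  | succ m ih =>
    have hsum := add_mem_add ih hx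
    rw [← convexHull_add] at hsum
    rw [Nat.cast_succ, add_smul, one_smul, Nat.succ_mul]
    exact convexHull_mono (hA _ _) hsum

theorem inv_smul_convexHull_subset_of_dvd (hA : ∀ a b, A a + A b ⊆ A (a + b)) {l k : ℕ}
    (hk : 0 < k) (hlk : l ∣ k) :
    (l : ℝ)⁻¹ • convexHull ℝ (A l) ⊆ (k : ℝ)⁻¹ • convexHull ℝ (A k) := by
  obtain ⟨m, rfl⟩ := hlk
  obtain ⟨m, rfl⟩ : ∃ m', m = m' + 1 :=
    Nat.exists_eq_succ_of_ne_zero (by rintro rfl; simp at hk)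
  have hl : (l : ℝ) ≠ 0 := by exact_mod_cast (Nat.pos_of_mul_pos_right hk).ne'
  rintro _ ⟨x, hx, rfl⟩
  refine ⟨_, mul_comm l (m + 1) ▸ natCast_succ_smul_mem_convexHull hA hx m, ?_⟩
  simp only [smul_smul]
  congr 1
  field_simp
  push_cast
  ring

end GradedFamily

theorem exists_forall_dvd_subset {α : Type*} {D : ℕ → Set α}
    (hD : ∀ l k, 0 < k → l ∣ k → D l ⊆ D k) {G : Set α} (hG : G.Finite)
    (hGD : G ⊆ ⋃ k ≥ 1, D k) : ∃ k₀, 1 ≤ k₀ ∧ ∀ k, 0 < k → k₀ ∣ k → G ⊆ D k := by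
  have hlevel : ∀ p ∈ G, ∃ k, 1 ≤ k ∧ p ∈ D k := by simpa [subset_def] using hGD
  choose! κ hκ hpκ using hlevel
  refine ⟨∏ p ∈ hG.toFinset, κ p,
    Finset.one_le_prod' fun p hp => hκ p (hG.mem_toFinset.1 hp),
    fun k hk hdvd p hp => hD _ k hk ?_ (hpκ p hp)⟩
  exact (Finset.dvd_prod_of_mem κ (hG.mem_toFinset.2 hp)).trans hdvd

def levelSet {ι : Type*} (Γ : Set ((ι → ℕ) × ℕ)) (k : ℕ) : Set (ι → ℝ) :=
  {x | ∃ α : ι → ℕ, (α, k) ∈ Γ ∧ x = fun i => (α i : ℝ)}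

theorem levelSet_add_subset {ι : Type*} {Γ : Set ((ι → ℕ) × ℕ)}
    (hΓ : ∀ x ∈ Γ, ∀ y ∈ Γ, x + y ∈ Γ) (a b : ℕ) :
    levelSet Γ a + levelSet Γ b ⊆ levelSet Γ (a + b) := by
  rintro _ ⟨_, ⟨α, hα, rfl⟩, _, ⟨β, hβ, rfl⟩, rfl⟩
  exact ⟨α + β, hΓ _ hα _ hβ, by ext; simp⟩

theorem stmt6 (n : ℕ) (Γ : Set ((Fin n → ℕ) × ℕ))
    (hΓ : ∀ x ∈ Γ, ∀ y ∈ Γ, x + y ∈ Γ)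
    (Γk : ℕ → Set (Fin n → ℝ))
    (hΓk : ∀ k, Γk k = {x | ∃ α : Fin n → ℕ, (α, k) ∈ Γ ∧ x = fun i => (α i : ℝ)})
    (Δk : ℕ → Set (Fin n → ℝ))
    (hΔk : ∀ k, Δk k = (k : ℝ)⁻¹ • convexHull ℝ (Γk k))
    (Δ : Set (Fin n → ℝ))
    (hΔ : Δ = closure (convexHull ℝ (⋃ k ≥ 1, Δk k)))
    (K : Set (Fin n → ℝ)) (hK : IsCompact K) (hKΔ : K ⊆ interior Δ) :
    ∃ k₀ : ℕ, 1 ≤ k₀ ∧ ∀ k : ℕ, 0 < k → k₀ ∣ k → K ⊆ Δk k := by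
  obtain rfl : Γk = levelSet Γ := funext hΓk
  have hmono : ∀ l k, 0 < k → l ∣ k → Δk l ⊆ Δk k := fun l k hk hlk => by
    simpa only [hΔk] using inv_smul_convexHull_subset_of_dvd (levelSet_add_subset hΓ) hk hlk
  have hconv : ∀ k, Convex ℝ (Δk k) := fun k => hΔk k ▸ (convex_convexHull ℝ _).smul _
  rw [hΔ, (convex_convexHull ℝ _).interior_closure_eq_interior] at hKΔ
  obtain ⟨G, hGS, hGfin, hKG⟩ := hK.exists_finite_subset_convexHull hKΔ
  obtain ⟨k₀, hk₀, hGΔ⟩ := exists_forall_dvd_subset hmono hGfin hGS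
  exact ⟨k₀, hk₀, fun k hk hdvd => hKG.trans (convexHull_min (hGΔ k hk hdvd) (hconv k))⟩
end

section
/- Let Γ be an additive subsemigroup of ℕⁿ × ℕ, for k ≥ 1 set Γ_k := { α ∈ ℕⁿ : (α,k) ∈ Γ } and Δ_k := (1/k)·Conv(Γ_k), and let Δ_k^ess denote the interior of Δ_k as a subset of ℝ₊ⁿ := { x ∈ ℝⁿ : xᵢ ≥ 0 for all i } with its induced (subspace) topology. Set Δ^ess := ⋃_{k≥1} Δ_{k!}^ess. If K is a compact subset of Δ^ess, then there exists an integer k₀ ≥ 1 such that K ⊆ Δ_k^ess for every positive integer multiple k of k₀. -/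
/-! Since `Γ` is closed under addition, `m • Γ_a ⊆ Γ_{ma}`, hence `Δ_a ⊆ Δ_k` whenever `a ∣ k`:
the bodies grow along divisibility. The essential interiors `Δ_{i!}^ess` form an open cover of `K`
in `ℝ₊ⁿ`; by compactness finitely many `i ∈ F` suffice, and `k₀ = ∏_{i ∈ F} i!` works. -/

open Pointwise

/-- The nonnegative orthant `ℝ₊ⁿ`. -/
def Rplus (n : ℕ) : Set (Fin n → ℝ) := {x | ∀ i, 0 ≤ x i}

/-- The essential interior of `T`: the interior of `T ∩ ℝ₊ⁿ` as a subset of `ℝ₊ⁿ`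
with its induced (subspace) topology, viewed again as a subset of `ℝⁿ`. -/
def essInterior {n : ℕ} (T : Set (Fin n → ℝ)) : Set (Fin n → ℝ) :=
  (Subtype.val : Rplus n → (Fin n → ℝ)) ''
    interior ((Subtype.val : Rplus n → (Fin n → ℝ)) ⁻¹' T)

open Set

theorem nsmul_mem_of_add_mem {M : Type*} [AddMonoid M] {S : Set M}
    (hS : ∀ x ∈ S, ∀ y ∈ S, x + y ∈ S) {m : ℕ} (hm : m ≠ 0) {p : M} (hp : p ∈ S) :
    m • p ∈ S := by
  obtain ⟨m, rfl⟩ := Nat.exists_eq_add_one_of_ne_zero hm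
  clear hm
  induction m with
  | zero => simpa using hp
  | succ m ih =>
    rw [succ_nsmul]
    exact hS _ ih _ hp

section OkounkovBody

variable {ι : Type*} {Γ : Set ((ι → ℕ) × ℕ)}

def slice (Γ : Set ((ι → ℕ) × ℕ)) (k : ℕ) : Set (ι → ℝ) :=
  {x | ∃ α : ι → ℕ, (α, k) ∈ Γ ∧ x = fun i => (α i : ℝ)}

def okounkovBody (Γ : Set ((ι → ℕ) × ℕ)) (k : ℕ) : Set (ι → ℝ) :=
  (k : ℝ)⁻¹ • convexHull ℝ (slice Γ k)

theorem smul_slice_subset (hΓ : ∀ x ∈ Γ, ∀ y ∈ Γ, x + y ∈ Γ) {m : ℕ} (hm : m ≠ 0) (a : ℕ) :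
    (m : ℝ) • slice Γ a ⊆ slice Γ (m * a) := by
  rintro _ ⟨_, ⟨α, hα, rfl⟩, rfl⟩
  refine ⟨m • α, by simpa using nsmul_mem_of_add_mem hΓ hm hα, ?_⟩
  ext i
  simp

theorem okounkovBody_mono_of_dvd (hΓ : ∀ x ∈ Γ, ∀ y ∈ Γ, x + y ∈ Γ) {a k : ℕ} (hk : k ≠ 0)
    (hak : a ∣ k) : okounkovBody Γ a ⊆ okounkovBody Γ k := by
  obtain ⟨m, rfl⟩ := hak
  have ha : (a : ℝ) ≠ 0 := by exact_mod_cast left_ne_zero_of_mul hk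
  have hm : m ≠ 0 := right_ne_zero_of_mul hk
  intro x hx
  rw [okounkovBody, mem_inv_smul_set_iff₀ ha] at hx
  rw [okounkovBody, mem_inv_smul_set_iff₀ (by exact_mod_cast hk), mul_comm a m, Nat.cast_mul,
    ← smul_smul]
  have hhull : (m : ℝ) • convexHull ℝ (slice Γ a) ⊆ convexHull ℝ (slice Γ (m * a)) := by
    rw [← convexHull_smul]
    exact convexHull_mono (smul_slice_subset hΓ hm a)
  exact hhull (smul_mem_smul_set hx)

end OkounkovBody

section EssInterior

variable {n : ℕ}

theorem essInterior_mono {S T : Set (Fin n → ℝ)} (h : S ⊆ T) : essInterior S ⊆ essInterior T :=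
  image_mono (interior_mono (preimage_mono h))

theorem essInterior_subset_Rplus (T : Set (Fin n → ℝ)) : essInterior T ⊆ Rplus n := by
  rintro _ ⟨y, -, rfl⟩
  exact y.2

theorem IsCompact.exists_finset_subset_iUnion_essInterior {ι : Type*} {K : Set (Fin n → ℝ)}
    (hK : IsCompact K) {D : ι → Set (Fin n → ℝ)} (hKD : K ⊆ ⋃ i, essInterior (D i)) :
    ∃ F : Finset ι, K ⊆ ⋃ i ∈ F, essInterior (D i) := by
  have hKR : K ⊆ Rplus n := hKD.trans (iUnion_subset fun i => essInterior_subset_Rplus _)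
  have hK' : IsCompact (((↑) : Rplus n → (Fin n → ℝ)) ⁻¹' K) :=
    Topology.IsInducing.subtypeVal.isCompact_preimage' hK (by rwa [Subtype.range_coe])
  obtain ⟨F, hF⟩ := hK'.elim_finite_subcover
    (fun i => interior (((↑) : Rplus n → (Fin n → ℝ)) ⁻¹' D i)) (fun _ => isOpen_interior) (by
      rintro ⟨x, hxR⟩ hx
      obtain ⟨i, y, hy, rfl⟩ := mem_iUnion.1 (hKD hx)
      exact mem_iUnion.2 ⟨i, hy⟩)
  refine ⟨F, fun x hx => ?_⟩
  obtain ⟨i, hi, hxi⟩ := mem_iUnion₂.1 (hF (show (⟨x, hKR hx⟩ : Rplus n) ∈ _ from hx))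
  exact mem_iUnion₂.2 ⟨i, hi, _, hxi, rfl⟩

end EssInterior

theorem stmt7 (n : ℕ) (Γ : Set ((Fin n → ℕ) × ℕ))
    (hΓ : ∀ x ∈ Γ, ∀ y ∈ Γ, x + y ∈ Γ)
    (Γk : ℕ → Set (Fin n → ℝ))
    (hΓk : ∀ k, Γk k = {x | ∃ α : Fin n → ℕ, (α, k) ∈ Γ ∧ x = fun i => (α i : ℝ)})
    (Δk : ℕ → Set (Fin n → ℝ))
    (hΔk : ∀ k, Δk k = (k : ℝ)⁻¹ • convexHull ℝ (Γk k))
    (Δess : Set (Fin n → ℝ))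
    (hΔess : Δess = ⋃ k ≥ 1, essInterior (Δk (Nat.factorial k)))
    (K : Set (Fin n → ℝ)) (hK : IsCompact K) (hKΔ : K ⊆ Δess) :
    ∃ k₀ : ℕ, 1 ≤ k₀ ∧ ∀ k : ℕ, 0 < k → k₀ ∣ k → K ⊆ essInterior (Δk k) := by
  obtain rfl : Γk = slice Γ := funext hΓk
  obtain rfl : Δk = okounkovBody Γ := funext hΔk
  subst hΔess
  have hcover : K ⊆ ⋃ i : ℕ, essInterior (okounkovBody Γ i.factorial) :=
    hKΔ.trans (iUnion₂_subset fun i _ => subset_iUnion_of_subset i Subset.rfl)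
  obtain ⟨F, hF⟩ := hK.exists_finset_subset_iUnion_essInterior hcover
  refine ⟨∏ i ∈ F, Nat.factorial i, Finset.prod_pos fun i _ => Nat.factorial_pos i,
    fun k hk hdvd x hx => ?_⟩
  obtain ⟨i, hi, hxi⟩ := mem_iUnion₂.1 (hF hx)
  exact essInterior_mono
    (okounkovBody_mono_of_dvd hΓ hk.ne' ((Finset.dvd_prod_of_mem _ hi).trans hdvd)) hxi
end

section
/- Let A ⊆ ℝⁿ be a finite set whose convex hull has nonempty interior in ℝⁿ. Then the function u_A : ℝⁿ → ℝ defined by u_A(x) := log(∑_{α∈A} e^{x·α}) is strictly convex on ℝⁿ. -/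
/-!
Subtracting `log ∑ exp X` from `X` and `log ∑ exp Y` from `Y` turns `exp ∘ X` and `exp ∘ Y` into
probability weights; averaging them with strict convexity of `exp` shows that log-sum-exp is
strictly convex along any segment on which `X - Y` is not constant on the index set. For the
exponents `x ⬝ᵥ α` and `y ⬝ᵥ α` with `x ≠ y`, constancy of `(x - y) ⬝ᵥ α` on `A` would put the
convex hull of `A` inside a hyperplane, which has empty interior.
-/

open Real Finset Set

section Hyperplane

variable {E : Type*} [AddCommGroup E] [TopologicalSpace E] [ContinuousAdd E] [Module ℝ E]
  [ContinuousSMul ℝ E]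

theorem ContinuousLinearMap.interior_preimage_singleton_eq_empty {f : StrongDual ℝ E}
    (hf : f ≠ 0) (c : ℝ) : interior (f ⁻¹' {c}) = ∅ := by
  have himage : f '' interior (f ⁻¹' {c}) ⊆ interior {c} :=
    interior_maximal (image_subset_iff.2 interior_subset)
      (f.isOpenMap_of_ne_zero hf _ isOpen_interior)
  rw [interior_singleton, subset_empty_iff, image_eq_empty] at himage
  exact himage

theorem not_forall_eq_of_interior_convexHull_nonempty {s : Set E}
    (hs : (interior (convexHull ℝ s)).Nonempty) {f : StrongDual ℝ E} (hf : f ≠ 0) (c : ℝ) :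
    ¬ ∀ x ∈ s, f x = c := by
  intro hfc
  have hhull : convexHull ℝ s ⊆ f ⁻¹' {c} :=
    convexHull_min hfc ((convex_singleton c).linear_preimage (f : E →ₗ[ℝ] ℝ))
  simpa [f.interior_preimage_singleton_eq_empty hf] using hs.mono (interior_mono hhull)

end Hyperplane

theorem log_sum_exp_lt_of_not_exists_sub_eq {ι : Type*} {s : Finset ι} {X Y : ι → ℝ}
    (hXY : ¬ ∃ c, ∀ i ∈ s, X i - Y i = c) {a b : ℝ} (ha : 0 < a) (hb : 0 < b) (hab : a + b = 1) :
    log (∑ i ∈ s, exp (a * X i + b * Y i)) <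
      a * log (∑ i ∈ s, exp (X i)) + b * log (∑ i ∈ s, exp (Y i)) := by
  have hs : s.Nonempty := by
    by_contra h
    exact hXY ⟨0, by simp [Finset.not_nonempty_iff_eq_empty.1 h]⟩
  set Sx := ∑ i ∈ s, exp (X i)
  set Sy := ∑ i ∈ s, exp (Y i)
  have hSx : 0 < Sx := sum_pos (fun _ _ ↦ exp_pos _) hs
  have hSy : 0 < Sy := sum_pos (fun _ _ ↦ exp_pos _) hs
  set p := fun i ↦ X i - log Sx
  set q := fun i ↦ Y i - log Sy
  have hp : ∑ i ∈ s, exp (p i) = 1 := by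
    simp only [p, exp_sub, exp_log hSx, ← sum_div]
    exact div_self hSx.ne'
  have hq : ∑ i ∈ s, exp (q i) = 1 := by
    simp only [q, exp_sub, exp_log hSy, ← sum_div]
    exact div_self hSy.ne'
  obtain ⟨j, hj, hpq⟩ : ∃ j ∈ s, p j ≠ q j := by
    by_contra! h
    exact hXY ⟨log Sx - log Sy, fun i hi ↦ by linarith [h i hi]⟩
  have hlt : ∑ i ∈ s, exp (a * p i + b * q i) < 1 := calc
    ∑ i ∈ s, exp (a * p i + b * q i) < ∑ i ∈ s, (a * exp (p i) + b * exp (q i)) := by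
      refine sum_lt_sum (fun i _ ↦ ?_) ⟨j, hj, ?_⟩
      · simpa using convexOn_exp.2 (mem_univ (p i)) (mem_univ (q i)) ha.le hb.le hab
      · simpa using strictConvexOn_exp.2 (mem_univ (p j)) (mem_univ (q j)) hpq ha hb hab
    _ = 1 := by rw [sum_add_distrib, ← mul_sum, ← mul_sum, hp, hq, mul_one, mul_one, hab]
  rw [log_lt_iff_lt_exp (sum_pos (fun _ _ ↦ exp_pos _) hs)]
  calc ∑ i ∈ s, exp (a * X i + b * Y i)
      = exp (a * log Sx + b * log Sy) * ∑ i ∈ s, exp (a * p i + b * q i) := by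
        rw [mul_sum]
        refine sum_congr rfl fun i _ ↦ ?_
        rw [← exp_add]
        congr 1
        simp only [p, q]
        ring
    _ < exp (a * log Sx + b * log Sy) := mul_lt_of_lt_one_right (exp_pos _) hlt

theorem strictConvexOn_log_sum_exp {E ι : Type*} [AddCommGroup E] [Module ℝ E] (s : Finset ι)
    (f : ι → E →ₗ[ℝ] ℝ) (hf : ∀ v ≠ 0, ¬ ∃ c, ∀ i ∈ s, f i v = c) :
    StrictConvexOn ℝ univ fun x ↦ log (∑ i ∈ s, exp (f i x)) := by
  refine ⟨convex_univ, fun x _ y _ hxy a b ha hb hab ↦ ?_⟩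
  simp only [map_add, map_smul, smul_eq_mul]
  refine log_sum_exp_lt_of_not_exists_sub_eq ?_ ha hb hab
  simpa only [map_sub] using hf (x - y) (sub_ne_zero.2 hxy)

theorem stmt10 (n : ℕ) (A : Finset (Fin n → ℝ))
    (hA : (interior (convexHull ℝ (A : Set (Fin n → ℝ)))).Nonempty)
    (u : (Fin n → ℝ) → ℝ)
    (hu : ∀ x, u x = Real.log (∑ α ∈ A, Real.exp (∑ i, x i * α i))) :
    StrictConvexOn ℝ Set.univ u := by
  obtain rfl : u = fun x ↦ log (∑ α ∈ A, exp ((dotProductBilin ℝ ℝ).flip α x)) := funext hu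
  refine strictConvexOn_log_sum_exp A _ fun v hv ⟨c, hc⟩ ↦ ?_
  have hdot : LinearMap.toContinuousLinearMap (dotProductBilin ℝ ℝ v) ≠ 0 := fun h ↦
    hv (dotProduct_self_eq_zero.1 (congrArg (· v) h))
  exact not_forall_eq_of_interior_convexHull_nonempty hA hdot c hc
end

section
/- Let A ⊆ ℝⁿ be a finite set whose convex hull Conv(A) has nonempty interior in ℝⁿ. Define μ_A : ℝⁿ → ℝⁿ by μ_A(x) := (∑_{α∈A} e^{x·α} α) / (∑_{α∈A} e^{x·α}) (this is the gradient of the function u_A(x) = log ∑_{α∈A} e^{x·α}). Then the image μ_A(ℝⁿ) equals the interior of Conv(A). -/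
/-!
The weights `exp (x ⬝ᵥ α) / ∑ β, exp (x ⬝ᵥ β)` are strictly positive, so `μ_A x` is a convex
combination of `A` with all weights positive, which lies in the interior of the hull.
Conversely, if `y` is interior, a ball around `y` lies in the hull, so
`max_α x ⬝ᵥ α ≥ x ⬝ᵥ y + ε ‖x‖`; hence `x ↦ log ∑ α, exp (x ⬝ᵥ α) - x ⬝ᵥ y` is coercive,
attains its minimum, and its derivative `μ_A x - y` vanishes at a minimiser.
-/

open Finset Filter Real

theorem sum_smul_mem_interior_convexHull {E : Type*} [AddCommGroup E] [Module ℝ E]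
    [TopologicalSpace E] [IsTopologicalAddGroup E] [ContinuousSMul ℝ E] {s : Finset E}
    (hs : (interior (convexHull ℝ (s : Set E))).Nonempty) {w : E → ℝ}
    (hw₀ : ∀ a ∈ s, 0 < w a) (hw₁ : ∑ a ∈ s, w a = 1) :
    ∑ a ∈ s, w a • a ∈ interior (convexHull ℝ (s : Set E)) := by
  obtain ⟨b, hb⟩ := hs
  have hsne : s.Nonempty := by
    simpa using convexHull_nonempty_iff.1 ⟨b, interior_subset hb⟩
  obtain ⟨v, hv₀, hv₁, rfl⟩ := Finset.mem_convexHull'.1 (interior_subset hb)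
  obtain ⟨a₀, ha₀, hmin⟩ := s.exists_min_image w hsne
  set m := w a₀
  have hm : 0 < m := hw₀ a₀ ha₀
  -- `q = p + m (p - b)` still lies in the hull, and `p` is on the open segment from `b` to `q`
  have hq : ∑ a ∈ s, ((1 + m) * w a - m * v a) • a ∈ convexHull ℝ (s : Set E) := by
    refine (convex_convexHull ℝ _).sum_mem (fun a ha => ?_) ?_
      (fun a ha => subset_convexHull ℝ _ ha)
    · have hva : v a ≤ 1 := hv₁ ▸ single_le_sum hv₀ ha
      nlinarith [hmin a ha, hv₀ a ha]
    · rw [sum_sub_distrib, ← mul_sum, ← mul_sum, hw₁, hv₁]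
      ring
  have hcombo : (m / (1 + m)) • ∑ a ∈ s, v a • a
      + (1 / (1 + m)) • ∑ a ∈ s, ((1 + m) * w a - m * v a) • a = ∑ a ∈ s, w a • a := by
    rw [smul_sum, smul_sum, ← sum_add_distrib]
    refine sum_congr rfl fun a _ => ?_
    rw [smul_smul, smul_smul, ← add_smul]
    congr 1
    field_simp
    ring
  rw [← hcombo]
  exact (convex_convexHull ℝ _).combo_interior_self_mem_interior hb hq (by positivity)
    (by positivity) (by field_simp; ring)

section MomentMap

variable {ι : Type*} [Fintype ι]

theorem exists_dotProduct_add_norm_le {A : Finset (ι → ℝ)} {y : ι → ℝ}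
    (hy : y ∈ interior (convexHull ℝ (A : Set (ι → ℝ)))) :
    ∃ ε > 0, ∀ x : ι → ℝ, ∃ α ∈ A, x ⬝ᵥ y + ε * ‖x‖ ≤ x ⬝ᵥ α := by
  obtain ⟨r, hr, hball⟩ := Metric.mem_nhds_iff.1 (mem_interior_iff_mem_nhds.1 hy)
  refine ⟨r / 2, by positivity, fun x => ?_⟩
  set σ : ι → ℝ := fun i => SignType.sign (x i)
  have hσ : ‖σ‖ ≤ 1 := (pi_norm_le_iff_of_nonneg zero_le_one).2 fun i => by
    change |(SignType.sign (x i) : ℝ)| ≤ 1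
    rcases SignType.sign (x i) with _ | _ | _ <;> simp
  have hxσ : ‖x‖ ≤ x ⬝ᵥ σ := by
    simp only [dotProduct, σ, self_mul_sign]
    refine (pi_norm_le_iff_of_nonneg (by positivity)).2 fun i => ?_
    rw [Real.norm_eq_abs]
    exact single_le_sum (f := fun i => |x i|) (fun i _ => abs_nonneg _) (mem_univ i)
  have hz : y + (r / 2) • σ ∈ convexHull ℝ (A : Set (ι → ℝ)) := by
    refine hball ?_
    rw [Metric.mem_ball, dist_eq_norm, add_sub_cancel_left, norm_smul,
      Real.norm_of_nonneg (by positivity)]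
    nlinarith
  obtain ⟨α, hα, hzα⟩ := ((dotProductBilin ℝ ℝ x).convexOn
    (convex_convexHull ℝ _)).exists_ge_of_mem_convexHull (subset_convexHull ℝ _) hz
  refine ⟨α, hα, le_trans ?_ hzα⟩
  simp only [dotProductBilin_apply_apply, dotProduct_add, dotProduct_smul, smul_eq_mul]
  gcongr

noncomputable def expSum (A : Finset (ι → ℝ)) (x : ι → ℝ) : ℝ := ∑ α ∈ A, exp (x ⬝ᵥ α)

noncomputable def logSumExp (A : Finset (ι → ℝ)) (x : ι → ℝ) : ℝ := log (expSum A x)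

noncomputable def momentMap (A : Finset (ι → ℝ)) (x : ι → ℝ) : ι → ℝ :=
  (expSum A x)⁻¹ • ∑ α ∈ A, exp (x ⬝ᵥ α) • α

variable {A : Finset (ι → ℝ)}

theorem expSum_pos (hA : A.Nonempty) (x : ι → ℝ) : 0 < expSum A x :=
  sum_pos (fun _ _ => exp_pos _) hA

theorem dotProduct_le_logSumExp {α : ι → ℝ} (hα : α ∈ A) (x : ι → ℝ) :
    x ⬝ᵥ α ≤ logSumExp A x :=
  (le_log_iff_exp_le (expSum_pos ⟨α, hα⟩ x)).2 <|
    single_le_sum (f := fun β => exp (x ⬝ᵥ β)) (fun _ _ => (exp_pos _).le) hα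

theorem continuous_logSumExp (hA : A.Nonempty) : Continuous (logSumExp A) :=
  (continuous_finsetSum _ fun _ _ => (continuous_id.dotProduct continuous_const).rexp).log
    fun x => (expSum_pos hA x).ne'

theorem hasDerivAt_add_smul_dotProduct (x v w : ι → ℝ) (t : ℝ) :
    HasDerivAt (fun t : ℝ => (x + t • v) ⬝ᵥ w) (v ⬝ᵥ w) t := by
  simp only [add_dotProduct, smul_dotProduct, smul_eq_mul]
  simpa using ((hasDerivAt_id t).mul_const (v ⬝ᵥ w)).const_add (x ⬝ᵥ w)

theorem hasDerivAt_logSumExp_add_smul (hA : A.Nonempty) (x v : ι → ℝ) :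
    HasDerivAt (fun t : ℝ => logSumExp A (x + t • v)) (v ⬝ᵥ momentMap A x) 0 := by
  have hsum : HasDerivAt (fun t : ℝ => expSum A (x + t • v))
      (∑ α ∈ A, exp (x ⬝ᵥ α) * (v ⬝ᵥ α)) 0 := by
    refine HasDerivAt.fun_sum fun α _ => ?_
    simpa using (hasDerivAt_add_smul_dotProduct x v α 0).exp
  have hmean : v ⬝ᵥ momentMap A x = (∑ α ∈ A, exp (x ⬝ᵥ α) * (v ⬝ᵥ α)) / expSum A x := by
    simp only [momentMap, dotProduct_smul, dotProduct_sum, smul_eq_mul, div_eq_inv_mul]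
  have hlog := hsum.log (by simpa using (expSum_pos hA x).ne')
  rw [zero_smul, add_zero] at hlog
  rwa [hmean]

theorem momentMap_mem_interior_convexHull
    (hA : (interior (convexHull ℝ (A : Set (ι → ℝ)))).Nonempty) (x : ι → ℝ) :
    momentMap A x ∈ interior (convexHull ℝ (A : Set (ι → ℝ))) := by
  have hpos := expSum_pos (by simpa using convexHull_nonempty_iff.1 (hA.mono interior_subset)) x
  rw [momentMap, smul_sum]
  simp_rw [smul_smul]
  exact sum_smul_mem_interior_convexHull hA (fun α _ => by positivity)
    (by rw [← mul_sum]; exact inv_mul_cancel₀ hpos.ne')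

theorem tendsto_logSumExp_sub_dotProduct_cocompact {y : ι → ℝ}
    (hy : y ∈ interior (convexHull ℝ (A : Set (ι → ℝ)))) :
    Tendsto (fun x => logSumExp A x - x ⬝ᵥ y) (cocompact _) atTop := by
  obtain ⟨ε, hε, hsep⟩ := exists_dotProduct_add_norm_le hy
  refine tendsto_atTop_mono (fun x => ?_) (tendsto_norm_cocompact_atTop.const_mul_atTop hε)
  obtain ⟨α, hα, hxα⟩ := hsep x
  linarith [dotProduct_le_logSumExp hα x]

theorem momentMap_eq_of_forall_le (hA : A.Nonempty) {x₀ y : ι → ℝ}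
    (hmin : ∀ x, logSumExp A x₀ - x₀ ⬝ᵥ y ≤ logSumExp A x - x ⬝ᵥ y) :
    momentMap A x₀ = y := by
  set v := momentMap A x₀ - y
  have hderiv : HasDerivAt (fun t : ℝ => logSumExp A (x₀ + t • v) - (x₀ + t • v) ⬝ᵥ y)
      (v ⬝ᵥ v) 0 := by
    rw [show v ⬝ᵥ v = v ⬝ᵥ momentMap A x₀ - v ⬝ᵥ y from dotProduct_sub v _ y]
    exact (hasDerivAt_logSumExp_add_smul hA x₀ v).fun_sub
      (hasDerivAt_add_smul_dotProduct x₀ v y 0)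
  have hlocal : IsLocalMin (fun t : ℝ => logSumExp A (x₀ + t • v) - (x₀ + t • v) ⬝ᵥ y) 0 :=
    Eventually.of_forall fun t => by simpa using hmin (x₀ + t • v)
  exact sub_eq_zero.1 (dotProduct_self_eq_zero.1 (hlocal.hasDerivAt_eq_zero hderiv))

theorem mem_range_momentMap {y : ι → ℝ} (hy : y ∈ interior (convexHull ℝ (A : Set (ι → ℝ)))) :
    y ∈ Set.range (momentMap A) := by
  have hA : A.Nonempty := by simpa using convexHull_nonempty_iff.1 ⟨y, interior_subset hy⟩
  obtain ⟨x₀, hx₀⟩ := ((continuous_logSumExp hA).sub (continuous_id.dotProduct continuous_const)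
    ).exists_forall_le (tendsto_logSumExp_sub_dotProduct_cocompact hy)
  exact ⟨x₀, momentMap_eq_of_forall_le hA hx₀⟩

theorem range_momentMap (hA : (interior (convexHull ℝ (A : Set (ι → ℝ)))).Nonempty) :
    Set.range (momentMap A) = interior (convexHull ℝ (A : Set (ι → ℝ))) :=
  subset_antisymm (Set.range_subset_iff.2 (momentMap_mem_interior_convexHull hA))
    fun _ => mem_range_momentMap

end MomentMap

theorem stmt11 (n : ℕ) (A : Finset (Fin n → ℝ))
    (hA : (interior (convexHull ℝ (A : Set (Fin n → ℝ)))).Nonempty)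
    (μ : (Fin n → ℝ) → (Fin n → ℝ))
    (hμ : ∀ x, μ x = (∑ α ∈ A, Real.exp (∑ i, x i * α i))⁻¹ •
        ∑ α ∈ A, Real.exp (∑ i, x i * α i) • α) :
    Set.range μ = interior (convexHull ℝ (A : Set (Fin n → ℝ))) := by
  obtain rfl : μ = momentMap A := funext hμ
  exact range_momentMap hA
end

section
/- Let u : ℝⁿ → ℝ be a twice continuously differentiable strictly convex function and let V ⊆ ℝⁿ be an open set. Then ∫_V det(Hess u)(x) dx equals the Lebesgue measure of the image ∇u(V) of V under the gradient map ∇u, where (Hess u)(x) is the Hessian matrix (∂²u/∂xᵢ∂xⱼ)(x) and the integral is with respect to Lebesgue measure on ℝⁿ. -/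
/-!
Strict convexity makes `∇u` strictly monotone, `⟪∇u y - ∇u x, y - x⟫ > 0` for `x ≠ y`, hence
injective; and convexity makes the Hessian, which is the derivative of `∇u`, positive semidefinite,
so `|det (Hess u)| = det (Hess u)`. The identity is then the change of variables formula for the
injective differentiable map `∇u` on `V`.
-/

open MeasureTheory

/-- The gradient of `u : ℝⁿ → ℝ` with respect to the standard inner product. -/
noncomputable def grad {n : ℕ} (u : (Fin n → ℝ) → ℝ) (x : Fin n → ℝ) : Fin n → ℝ :=
  fun i => fderiv ℝ u x (Pi.single i 1)

/-- The Hessian matrix of second partial derivatives of `u : ℝⁿ → ℝ`. -/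
noncomputable def hessian {n : ℕ} (u : (Fin n → ℝ) → ℝ) (x : Fin n → ℝ) :
    Matrix (Fin n) (Fin n) ℝ :=
  Matrix.of fun i j => fderiv ℝ (fun y => fderiv ℝ u y (Pi.single j 1)) x (Pi.single i 1)

open Set AffineMap Matrix

section Convex

variable {E : Type*} [NormedAddCommGroup E] [NormedSpace ℝ E] {u : E → ℝ} {x y : E}

lemma hasDerivAt_comp_lineMap {t : ℝ} (hu : DifferentiableAt ℝ u (lineMap x y t)) :
    HasDerivAt (fun s : ℝ => u (lineMap x y s)) (fderiv ℝ u (lineMap x y t) (y - x)) t :=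
  hu.hasFDerivAt.comp_hasDerivAt t hasDerivAt_lineMap

lemma StrictConvexOn.comp_lineMap (hu : StrictConvexOn ℝ univ u) (hxy : x ≠ y) :
    StrictConvexOn ℝ univ fun t : ℝ => u (lineMap x y t) := by
  refine ⟨convex_univ, fun a _ b _ hab s t hs ht hst => ?_⟩
  have hne : lineMap x y a ≠ lineMap x y b := (lineMap_injective ℝ hxy).ne hab
  simpa only [Convex.combo_affine_apply hst] using hu.2 (mem_univ _) (mem_univ _) hne hs ht hst

lemma StrictConvexOn.fderiv_apply_sub_lt (hu : StrictConvexOn ℝ univ u)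
    (hd : Differentiable ℝ u) (hxy : x ≠ y) :
    fderiv ℝ u x (y - x) < fderiv ℝ u y (y - x) := by
  have hφ (t : ℝ) := hasDerivAt_comp_lineMap (x := x) (y := y) (t := t) (hd _)
  have := (hu.comp_lineMap hxy).strictMonoOn_deriv (fun t _ => (hφ t).differentiableAt)
    (mem_univ 0) (mem_univ 1) one_pos
  rwa [(hφ 0).deriv, (hφ 1).deriv, lineMap_apply_zero, lineMap_apply_one] at this

lemma ConvexOn.monotone_fderiv_lineMap (hu : ConvexOn ℝ univ u) (hd : Differentiable ℝ u)
    (x y : E) : Monotone fun t : ℝ => fderiv ℝ u (lineMap x y t) (y - x) := by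
  have hφ (t : ℝ) := hasDerivAt_comp_lineMap (x := x) (y := y) (t := t) (hd _)
  have := (hu.comp_affineMap (lineMap x y)).monotoneOn_deriv fun t _ => (hφ t).differentiableAt
  have hderiv : deriv (fun s : ℝ => u (lineMap x y s)) =
      fun t => fderiv ℝ u (lineMap x y t) (y - x) :=
    funext fun t => (hφ t).deriv
  simpa only [Function.comp_def, hderiv, preimage_univ, monotoneOn_univ] using this

lemma ConvexOn.fderiv_fderiv_apply_self_nonneg (hu : ConvexOn ℝ univ u)
    (hd : Differentiable ℝ u) (hd2 : DifferentiableAt ℝ (fderiv ℝ u) x) (v : E) :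
    0 ≤ fderiv ℝ (fderiv ℝ u) x v v := by
  have hline : HasDerivAt (fun t : ℝ => fderiv ℝ u (lineMap x (x + v) t))
      (fderiv ℝ (fderiv ℝ u) x v) 0 := by
    have hx : HasFDerivAt (fderiv ℝ u) (fderiv ℝ (fderiv ℝ u) x) (lineMap x (x + v) (0 : ℝ)) := by
      rw [lineMap_apply_zero]; exact hd2.hasFDerivAt
    simpa [Function.comp_def] using hx.comp_hasDerivAt (0 : ℝ) hasDerivAt_lineMap
  have hmono := hu.monotone_fderiv_lineMap hd x (x + v)
  rw [add_sub_cancel_left] at hmono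
  simpa [(hline.clm_apply (hasDerivAt_const 0 v)).deriv] using hmono.deriv_nonneg (x := 0)

end Convex

section Gradient

variable {n : ℕ} {u : (Fin n → ℝ) → ℝ} {x : Fin n → ℝ}

lemma fderiv_eq_of_grad_eq {y : Fin n → ℝ} (h : grad u x = grad u y) :
    fderiv ℝ u x = fderiv ℝ u y :=
  ContinuousLinearMap.coe_injective <|
    (Pi.basisFun ℝ (Fin n)).ext fun i => by simpa [grad] using congrFun h i

lemma StrictConvexOn.injective_grad (hu : StrictConvexOn ℝ univ u) (hd : Differentiable ℝ u) :
    Function.Injective (grad u) := by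
  intro x y h
  by_contra hxy
  exact (hu.fderiv_apply_sub_lt hd hxy).ne (by rw [fderiv_eq_of_grad_eq h])

lemma hessian_apply (hd2 : DifferentiableAt ℝ (fderiv ℝ u) x) (i j : Fin n) :
    hessian u x i j = fderiv ℝ (fderiv ℝ u) x (Pi.single i 1) (Pi.single j 1) := by
  simp [hessian, fderiv_clm_apply hd2 (differentiableAt_const _)]

lemma hasFDerivAt_grad (hd2 : DifferentiableAt ℝ (fderiv ℝ u) x) :
    HasFDerivAt (grad u) (LinearMap.toContinuousLinearMap (toLin' (hessian u x)ᵀ)) x := by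
  let Φ : ((Fin n → ℝ) →L[ℝ] ℝ) →L[ℝ] Fin n → ℝ :=
    .pi fun i => .apply ℝ ℝ (Pi.single i 1)
  refine (Φ.hasFDerivAt.comp x hd2.hasFDerivAt).congr_fderiv ?_
  apply ContinuousLinearMap.coe_injective
  refine (Pi.basisFun ℝ (Fin n)).ext fun j => ?_
  ext i
  simp [Φ, hessian_apply hd2]

lemma dotProduct_hessian_mulVec (hd2 : DifferentiableAt ℝ (fderiv ℝ u) x) (v w : Fin n → ℝ) :
    v ⬝ᵥ (hessian u x *ᵥ w) = fderiv ℝ (fderiv ℝ u) x v w := by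
  conv_rhs => rw [← (Pi.basisFun ℝ (Fin n)).sum_repr v, ← (Pi.basisFun ℝ (Fin n)).sum_repr w]
  simp only [dotProduct, mulVec, hessian_apply hd2, mul_comm, Finset.mul_sum, Pi.basisFun_repr,
    Pi.basisFun_apply, map_sum, map_smul, _root_.sum_apply, _root_.smul_apply, smul_eq_mul,
    mul_left_comm]
  rw [Finset.sum_comm]

lemma ConvexOn.posSemidef_hessian (hu : ConvexOn ℝ univ u) (h2 : ContDiff ℝ 2 u) :
    (hessian u x).PosSemidef := by
  have hd2 : DifferentiableAt ℝ (fderiv ℝ u) x :=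
    (h2.fderiv_right (m := 1) (by norm_num)).differentiable one_ne_zero x
  have hsymm : IsSymmSndFDerivAt ℝ u x := h2.contDiffAt.isSymmSndFDerivAt (by simp)
  refine .of_dotProduct_mulVec_nonneg ?_ fun v => ?_
  · ext i j
    simp [hessian_apply hd2, hsymm (Pi.single i 1)]
  · simpa [dotProduct_hessian_mulVec hd2] using
      hu.fderiv_fderiv_apply_self_nonneg (h2.differentiable (by norm_num)) hd2 v

end Gradient

theorem stmt12 (n : ℕ) (u : (Fin n → ℝ) → ℝ)
    (hu : ContDiff ℝ 2 u) (hconv : StrictConvexOn ℝ Set.univ u)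
    (V : Set (Fin n → ℝ)) (hV : IsOpen V) :
    ∫⁻ x in V, ENNReal.ofReal ((hessian u x).det) ∂volume
      = volume (grad u '' V) := by
  have hd : Differentiable ℝ u := hu.differentiable (by norm_num)
  have hd2 : Differentiable ℝ (fderiv ℝ u) :=
    (hu.fderiv_right (m := 1) (by norm_num)).differentiable one_ne_zero
  rw [← lintegral_abs_det_fderiv_eq_addHaar_image volume hV.measurableSet
    (fun x _ => (hasFDerivAt_grad (hd2 x)).hasFDerivWithinAt) (hconv.injective_grad hd).injOn]
  refine lintegral_congr fun x => ?_
  rw [ContinuousLinearMap.det, LinearMap.coe_toContinuousLinearMap, LinearMap.det_toLin',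
    det_transpose, abs_of_nonneg (hconv.convexOn.posSemidef_hessian hu).det_nonneg]
end

section
/- Let p ∈ ℂ[z₁,…,zₙ] be a polynomial, let α be an exponent in the support of p with coefficient c ≠ 0, and let γ ∈ ℕⁿ satisfy γ·α < γ·β for every exponent β ≠ α in the support of p. Then for every compact set K ⊆ ℂⁿ, the functions z ↦ τ^{−γ·α} p(τ^{γ₁}z₁, …, τ^{γₙ}zₙ) converge uniformly on K to z ↦ c z^α as the nonzero complex parameter τ tends to 0. -/
/-!
Expanding `p(τ^γ z) = ∑_β p_β τ^{γ·β} z^β` and dividing by `τ^{γ·α}` leaves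
`∑_β p_β τ^{γ·β - γ·α} z^β`, a polynomial in `(τ, z)` because every exponent `γ·β - γ·α` is
nonnegative. Its value at `τ = 0` keeps only the term `β = α`, where the exponent vanishes.
Uniform convergence on compact sets then follows from joint continuity in `(τ, z)`.
-/

open MvPolynomial Filter Topology

theorem Continuous.tendstoUniformlyOn_of_isCompact {α β γ : Type*} [UniformSpace α]
    [WeaklyLocallyCompactSpace α] [UniformSpace β] [UniformSpace γ] {f : α → β → γ}
    (h : Continuous ↿f) (x : α) {K : Set β} (hK : IsCompact K) :
    TendstoUniformlyOn f (f x) (𝓝 x) K := by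
  have : CompactSpace K := isCompact_iff_compactSpace.mp hK
  rw [tendstoUniformlyOn_iff_tendstoUniformly_comp_coe]
  exact Continuous.tendstoUniformly (fun a (z : K) => f a z)
    (h.comp (continuous_fst.prodMk (continuous_subtype_val.comp continuous_snd))) x

namespace MvPolynomial

variable {σ R : Type*} [Fintype σ]

/-- The rescaled polynomial `τ^{-m} p(τ^γ z)`, written without negative powers of `τ`. The
truncated subtraction is harmless as long as `m ≤ γ·β` on the support of `p`. -/
noncomputable def weightDeformation [CommSemiring R] (p : MvPolynomial σ R) (γ : σ → ℕ) (m : ℕ)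
    (τ : R) (z : σ → R) : R :=
  ∑ β ∈ p.support, p.coeff β * τ ^ (∑ i, γ i * β i - m) * ∏ i, z i ^ β i

theorem eval_weightScaling [CommSemiring R] (p : MvPolynomial σ R) (γ : σ → ℕ) (τ : R)
    (z : σ → R) :
    eval (fun i => τ ^ γ i * z i) p =
      ∑ β ∈ p.support, p.coeff β * τ ^ (∑ i, γ i * β i) * ∏ i, z i ^ β i := by
  rw [eval_eq']
  refine Finset.sum_congr rfl fun β _ => ?_
  simp_rw [mul_pow, ← pow_mul, Finset.prod_mul_distrib, Finset.prod_pow_eq_pow_sum, mul_assoc]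

theorem zpow_neg_mul_eval_weightScaling [Field R] (p : MvPolynomial σ R) (γ : σ → ℕ) {m : ℕ}
    (hm : ∀ β ∈ p.support, m ≤ ∑ i, γ i * β i) {τ : R} (hτ : τ ≠ 0) (z : σ → R) :
    τ ^ (-(m : ℤ)) * eval (fun i => τ ^ γ i * z i) p = weightDeformation p γ m τ z := by
  rw [eval_weightScaling, Finset.mul_sum, weightDeformation]
  refine Finset.sum_congr rfl fun β hβ => ?_
  have hpow : τ ^ (-(m : ℤ)) * τ ^ (∑ i, γ i * β i) = τ ^ (∑ i, γ i * β i - m) := by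
    rw [← zpow_natCast, ← zpow_natCast, ← zpow_add₀ hτ, Nat.cast_sub (hm β hβ)]
    ring_nf
  rw [← hpow]
  ring

theorem continuous_weightDeformation [CommSemiring R] [TopologicalSpace R]
    [IsTopologicalSemiring R] (p : MvPolynomial σ R) (γ : σ → ℕ) (m : ℕ) :
    Continuous fun q : R × (σ → R) => weightDeformation p γ m q.1 q.2 := by
  unfold weightDeformation
  fun_prop

theorem weightDeformation_zero [CommSemiring R] {p : MvPolynomial σ R} {γ : σ → ℕ}
    {α : σ →₀ ℕ} (hγ : ∀ β ∈ p.support, β ≠ α → ∑ i, γ i * α i < ∑ i, γ i * β i)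
    (z : σ → R) :
    weightDeformation p γ (∑ i, γ i * α i) 0 z = p.coeff α * ∏ i, z i ^ α i := by
  rw [weightDeformation, Finset.sum_eq_single α]
  · simp
  · intro β hβ hβα
    rw [zero_pow (Nat.sub_ne_zero_of_lt (hγ β hβ hβα)), mul_zero, zero_mul]
  · intro hα
    rw [notMem_support_iff.mp hα, zero_mul, zero_mul]

end MvPolynomial

theorem stmt13_general (n : ℕ) (p : MvPolynomial (Fin n) ℂ) (α : Fin n →₀ ℕ)
    (c : ℂ) (hc : MvPolynomial.coeff α p = c)
    (γ : Fin n → ℕ)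
    (hγ : ∀ β ∈ p.support, β ≠ α → ∑ i, γ i * α i < ∑ i, γ i * β i)
    (K : Set (Fin n → ℂ)) (hK : IsCompact K) :
    TendstoUniformlyOn
      (fun (τ : ℂ) (z : Fin n → ℂ) =>
        τ ^ (-((∑ i, γ i * α i : ℕ) : ℤ)) *
          MvPolynomial.eval (fun i => τ ^ (γ i) * z i) p)
      (fun z => c * ∏ i, z i ^ α i)
      (nhdsWithin (0 : ℂ) {0}ᶜ) K := by
  subst hc
  have hm : ∀ β ∈ p.support, ∑ i, γ i * α i ≤ ∑ i, γ i * β i := fun β hβ =>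
    (eq_or_ne β α).elim (fun h => h ▸ le_rfl) fun h => (hγ β hβ h).le
  have hlim : TendstoUniformlyOn (weightDeformation p γ (∑ i, γ i * α i))
      (weightDeformation p γ (∑ i, γ i * α i) 0) (𝓝 0) K :=
    (continuous_weightDeformation p γ _).tendstoUniformlyOn_of_isCompact 0 hK
  refine (TendstoUniformlyOn.congr (fun u hu => nhdsWithin_le_nhds (hlim u hu)) ?_).congr_right
    fun z _ => weightDeformation_zero hγ z
  filter_upwards [self_mem_nhdsWithin] with τ hτ z _
  exact (zpow_neg_mul_eval_weightScaling p γ hm hτ z).symm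

theorem stmt13 (n : ℕ) (p : MvPolynomial (Fin n) ℂ) (α : Fin n →₀ ℕ)
    (c : ℂ) (hc : MvPolynomial.coeff α p = c) (hc0 : c ≠ 0)
    (γ : Fin n → ℕ)
    (hγ : ∀ β ∈ p.support, β ≠ α → ∑ i, γ i * α i < ∑ i, γ i * β i)
    (K : Set (Fin n → ℂ)) (hK : IsCompact K) :
    TendstoUniformlyOn
      (fun (τ : ℂ) (z : Fin n → ℂ) =>
        τ ^ (-((∑ i, γ i * α i : ℕ) : ℤ)) *
          MvPolynomial.eval (fun i => τ ^ (γ i) * z i) p)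
      (fun z => c * ∏ i, z i ^ α i)
      (nhdsWithin (0 : ℂ) {0}ᶜ) K :=
  stmt13_general n p α c hc γ hγ K hK
end
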